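/- Assume the periodic perforations, the perturbed perforations and Assumption (A2) as described in the context, and let Ω be an open subset of ℝ^d. For ε > 0 set Ω_ε = Ω ∖ ε·closure(𝒪), where ε·A = {εx : x ∈ A}. Then there exists a constant C > 0, independent of ε, such that for every ε > 0 and every continuously differentiable function u : ℝ^d → ℝ whose support is a compact subset of the open set Ω_ε, one has ∫_{Ω_ε} u² ≤ C ε² ∫_{Ω_ε} ‖∇u‖². -/

import Mathlib

open MeasureTheory Metric Set Filter Topology Asymptotics RealInnerProductSpace Pointwise

noncomputable section

abbrev Euc (d : ℕ) := EuclideanSpace ℝ (Fin d)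

def unitCube (d : ℕ) : Set (Euc d) := {x | ∀ i, x i ∈ Set.Ioo (0:ℝ) 1}

def closedUnitCube (d : ℕ) : Set (Euc d) := {x | ∀ i, x i ∈ Set.Icc (0:ℝ) 1}

def box {d : ℕ} (a b : Fin d → ℝ) : Set (Euc d) := {x | ∀ i, x i ∈ Set.Icc (a i) (b i)}

def cell (d : ℕ) (k : Fin d → ℤ) : Set (Euc d) := {x | ∀ i, x i - (k i : ℝ) ∈ Set.Ioo (0:ℝ) 1}

def perHole {d : ℕ} (Oper : Set (Euc d)) (k : Fin d → ℤ) : Set (Euc d) :=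
  {x | (show Euc d from WithLp.toLp 2 (fun i => x i - (k i : ℝ))) ∈ Oper}

def perHoles {d : ℕ} (Oper : Set (Euc d)) : Set (Euc d) := ⋃ k : Fin d → ℤ, perHole Oper k

def holes {d : ℕ} (O : (Fin d → ℤ) → Set (Euc d)) : Set (Euc d) := ⋃ k, O k

def perPlus {d : ℕ} (Oper : Set (Euc d)) (k : Fin d → ℤ) (a : ℝ) : Set (Euc d) :=
  {x | Metric.infDist x (perHole Oper k) < a}

def perMinus {d : ℕ} (Oper : Set (Euc d)) (k : Fin d → ℤ) (a : ℝ) : Set (Euc d) :=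
  {x ∈ perHole Oper k | a < Metric.infDist x (frontier (perHole Oper k))}

def lap {d : ℕ} (w : Euc d → ℝ) (x : Euc d) : ℝ :=
  ∑ i, fderiv ℝ (fun y => fderiv ℝ w y (EuclideanSpace.single i 1)) x (EuclideanSpace.single i 1)

/-!
Every rescaled cell `ε • (k + [0,1)^d)` is convex, has diameter `ε √d`, and (by (A2) and the
summability of `α`, which forces `α k → 0`) contains a hole `ε • O k` that in turn contains a
ball of radius `ε ρ` with `ρ > 0` independent of `k`. A function vanishing on that ball is
controlled on the cell by integrating its gradient along the rays from the centre of the ball;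
averaging over the rays turns the pointwise bound into an integral one, at the cost of the
Jacobian of the homothety, which is bounded because the radius of the ball is a fixed fraction of
the diameter of the cell. Summing over the cells gives the inequality with `C = d (√d / ρ)^d`.
-/

open Function

lemma sq_intervalIntegral_le {g : ℝ → ℝ} (hg : Continuous g) {a b : ℝ} (hab : a ≤ b) :
    (∫ t in a..b, g t) ^ 2 ≤ (b - a) * ∫ t in a..b, g t ^ 2 := by
  have hquad : ∀ s : ℝ, 0 ≤ (b - a) * (s * s) + (-2 * ∫ t in a..b, g t) * s +
      ∫ t in a..b, g t ^ 2 := fun s => by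
    have hexp : ∫ t in a..b, (g t - s) ^ 2 =
        (b - a) * (s * s) + (-2 * ∫ t in a..b, g t) * s + ∫ t in a..b, g t ^ 2 := by
      have hii {f : ℝ → ℝ} (hf : Continuous f) : IntervalIntegrable f volume a b :=
        hf.intervalIntegrable a b
      simp_rw [sub_sq]
      rw [intervalIntegral.integral_add (hii (by fun_prop)) (hii (by fun_prop)),
        intervalIntegral.integral_sub (hii (by fun_prop)) (hii (by fun_prop))]
      simp only [intervalIntegral.integral_const, smul_eq_mul, mul_comm _ s,
        intervalIntegral.integral_const_mul]
      ring
    exact hexp ▸ intervalIntegral.integral_nonneg hab fun t _ => sq_nonneg _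
  have := discrim_le_zero hquad
  rw [discrim] at this
  nlinarith

section Gradient

variable {E : Type*} [NormedAddCommGroup E] [InnerProductSpace ℝ E] [CompleteSpace E]
  {u : E → ℝ}

lemma ContDiff.continuous_gradient (hu : ContDiff ℝ 1 u) : Continuous (gradient u) :=
  (InnerProductSpace.toDual ℝ E).symm.continuous.comp (hu.continuous_fderiv one_ne_zero)

lemma gradient_of_notMem_tsupport {x : E} (hx : x ∉ tsupport u) : gradient u x = 0 := by
  simp [gradient, fderiv_of_notMem_tsupport ℝ hx]

protected lemma HasCompactSupport.gradient (hu : HasCompactSupport u) :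
    HasCompactSupport (gradient u) :=
  (hu.fderiv ℝ).comp_left (map_zero (InnerProductSpace.toDual ℝ E).symm)

lemma sub_eq_integral_inner_gradient (hu : ContDiff ℝ 1 u) (c v : E) (a b : ℝ) :
    u (c + b • v) - u (c + a • v) = ∫ t in a..b, ⟪gradient u (c + t • v), v⟫ := by
  have hderiv : ∀ t : ℝ, HasDerivAt (fun s : ℝ => u (c + s • v))
      ⟪gradient u (c + t • v), v⟫ t := fun t => by
    rw [inner_gradient_left]
    exact ((hu.differentiable one_ne_zero) _).hasFDerivAt.comp_hasDerivAt t
      (by simpa using ((hasDerivAt_id t).smul_const v).const_add c)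
  have hcont : Continuous fun t : ℝ => ⟪gradient u (c + t • v), v⟫ :=
    (hu.continuous_gradient.comp (by fun_prop)).inner continuous_const
  exact (intervalIntegral.integral_eq_sub_of_hasDerivAt (fun t _ => hderiv t)
    (hcont.intervalIntegrable a b)).symm

lemma sq_le_integral_gradient_of_eqOn_closedBall (hu : ContDiff ℝ 1 u) {c x : E} {ρ R : ℝ}
    (hρ : 0 < ρ) (hρR : ρ ≤ R) (hzero : ∀ y ∈ closedBall c ρ, u y = 0) (hxR : ‖x - c‖ ≤ R) :
    u x ^ 2 ≤ R ^ 2 * ∫ t in ρ / R..1, ‖gradient u (c + t • (x - c))‖ ^ 2 := by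
  set v := x - c
  have hγ : Continuous fun t : ℝ => gradient u (c + t • v) :=
    hu.continuous_gradient.comp (by fun_prop)
  have hρR₁ : ρ / R ≤ 1 := div_le_one_of_le₀ hρR (hρ.le.trans hρR)
  rcases le_or_gt ‖v‖ ρ with hv | hv
  · rw [hzero x (by rwa [mem_closedBall, dist_eq_norm]), zero_pow two_ne_zero]
    exact mul_nonneg (sq_nonneg R) (intervalIntegral.integral_nonneg hρR₁ fun t _ => sq_nonneg _)
  set a := ρ / ‖v‖
  have hv0 : 0 < ‖v‖ := hρ.trans hv
  have ha1 : a < 1 := (div_lt_one hv0).2 hv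
  have hua : u (c + a • v) = 0 := hzero _ <| by
    rw [mem_closedBall, dist_eq_norm, add_sub_cancel_left, norm_smul, Real.norm_of_nonneg
      (div_pos hρ hv0).le, div_mul_cancel₀ _ hv0.ne']
  have hux : u x = ∫ t in a..1, ⟪gradient u (c + t • v), v⟫ := by
    rw [← sub_eq_integral_inner_gradient hu, hua, one_smul, add_sub_cancel, sub_zero]
  have hinner (t : ℝ) : ⟪gradient u (c + t • v), v⟫ ^ 2 ≤ R ^ 2 * ‖gradient u (c + t • v)‖ ^ 2 :=
    calc ⟪gradient u (c + t • v), v⟫ ^ 2 = |⟪gradient u (c + t • v), v⟫| ^ 2 := (sq_abs _).symm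
      _ ≤ (‖gradient u (c + t • v)‖ * ‖v‖) ^ 2 := by gcongr; exact abs_real_inner_le_norm _ _
      _ ≤ (‖gradient u (c + t • v)‖ * R) ^ 2 := by gcongr
      _ = R ^ 2 * ‖gradient u (c + t • v)‖ ^ 2 := by ring
  calc u x ^ 2 = (∫ t in a..1, ⟪gradient u (c + t • v), v⟫) ^ 2 := by rw [hux]
    _ ≤ (1 - a) * ∫ t in a..1, ⟪gradient u (c + t • v), v⟫ ^ 2 :=
      sq_intervalIntegral_le (hγ.inner continuous_const) ha1.le
    _ ≤ ∫ t in a..1, ⟪gradient u (c + t • v), v⟫ ^ 2 :=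
      mul_le_of_le_one_left (intervalIntegral.integral_nonneg ha1.le fun t _ => sq_nonneg _)
        (by linarith [div_pos hρ hv0])
    _ ≤ ∫ t in a..1, R ^ 2 * ‖gradient u (c + t • v)‖ ^ 2 :=
      intervalIntegral.integral_mono_on ha1.le
        (((hγ.inner continuous_const).pow 2).intervalIntegrable _ _)
        (((hγ.norm.pow 2).const_mul _).intervalIntegrable _ _) fun t _ => hinner t
    _ = R ^ 2 * ∫ t in a..1, ‖gradient u (c + t • v)‖ ^ 2 := intervalIntegral.integral_const_mul _ _
    _ ≤ R ^ 2 * ∫ t in ρ / R..1, ‖gradient u (c + t • v)‖ ^ 2 := by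
      gcongr
      exact intervalIntegral.integral_mono_interval
        (div_le_div_of_nonneg_left hρ.le hv0 hxR) ha1.le le_rfl
        (.of_forall fun t => sq_nonneg _) ((hγ.norm.pow 2).intervalIntegrable _ _)

end Gradient

section Haar

variable {E : Type*} [NormedAddCommGroup E] [InnerProductSpace ℝ E] [FiniteDimensional ℝ E]
  [MeasurableSpace E] [BorelSpace E] (μ : Measure E) [μ.IsAddHaarMeasure] {c : E}

lemma setIntegral_comp_homothety_le {S : Set E} (hS : StarConvex ℝ c S) {F : E → ℝ}
    (hF0 : 0 ≤ F) (hF : IntegrableOn F S μ) {t : ℝ} (ht0 : 0 < t) (ht1 : t ≤ 1) :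
    ∫ x in S, F (c + t • (x - c)) ∂μ ≤ (t ^ Module.finrank ℝ E)⁻¹ * ∫ x in S, F x ∂μ := by
  set b := c - t • c
  have himage : (· + b) '' (t • S) ⊆ S := by
    rintro _ ⟨_, ⟨x, hx, rfl⟩, rfl⟩
    convert hS.add_smul_sub_mem hx ht0.le ht1 using 1
    simp only [b, smul_sub]
    abel
  calc ∫ x in S, F (c + t • (x - c)) ∂μ = ∫ x in S, F (t • x + b) ∂μ := by
        congr with x
        simp only [b, smul_sub]
        abel_nf
    _ = (t ^ Module.finrank ℝ E)⁻¹ * ∫ y in t • S, F (y + b) ∂μ :=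
        Measure.setIntegral_comp_smul_of_pos μ (fun y => F (y + b)) S ht0
    _ = (t ^ Module.finrank ℝ E)⁻¹ * ∫ y in (· + b) '' (t • S), F y ∂μ := by
        rw [(measurePreserving_add_right μ b).setIntegral_image_emb
          (measurableEmbedding_addRight b)]
    _ ≤ (t ^ Module.finrank ℝ E)⁻¹ * ∫ x in S, F x ∂μ := by
        refine mul_le_mul_of_nonneg_left ?_ (by positivity)
        exact setIntegral_mono_set hF (.of_forall hF0) himage.eventuallyLE

lemma integrable_comp_homothety_prod {F : E → ℝ} (hF : Continuous F) {S : Set E} {R : ℝ}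
    (hSR : S ⊆ closedBall c R) (a : ℝ) :
    Integrable (uncurry fun x t => F (c + t • (x - c)))
      ((μ.restrict S).prod (volume.restrict (Ioc a 1))) := by
  rw [Measure.prod_restrict]
  exact ContinuousOn.integrableOn_compact ((isCompact_closedBall c R).prod isCompact_Icc)
    (by fun_prop) |>.mono_set (prod_mono hSR Ioc_subset_Icc_self)

theorem setIntegral_sq_le_of_eqOn_closedBall {u : E → ℝ} (hu : ContDiff ℝ 1 u) {S : Set E}
    (hSm : MeasurableSet S) (hS : StarConvex ℝ c S) {ρ R : ℝ} (hρ : 0 < ρ) (hR : 0 ≤ R)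
    (hSR : S ⊆ closedBall c R) (hzero : ∀ y ∈ closedBall c ρ, u y = 0) :
    ∫ x in S, u x ^ 2 ∂μ ≤
      R ^ 2 * (R / ρ) ^ Module.finrank ℝ E * ∫ x in S, ‖gradient u x‖ ^ 2 ∂μ := by
  set F : E → ℝ := fun y => ‖gradient u y‖ ^ 2
  have hF : Continuous F := hu.continuous_gradient.norm.pow 2
  have hIF : 0 ≤ ∫ x in S, F x ∂μ := integral_nonneg fun _ => sq_nonneg _
  have hintS {f : E → ℝ} (hf : Continuous f) : IntegrableOn f S μ :=
    hf.continuousOn.integrableOn_compact (isCompact_closedBall c R) |>.mono_set hSR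
  rcases lt_or_ge R ρ with hRρ | hρR
  · rw [setIntegral_eq_zero_of_forall_eq_zero fun x hx => by
      rw [hzero x (closedBall_subset_closedBall hRρ.le (hSR hx)), zero_pow two_ne_zero]]
    positivity
  set a := ρ / R
  have ha : 0 < a := div_pos hρ (hρ.trans_le hρR)
  have hpoint (x : E) (hx : x ∈ S) :
      u x ^ 2 ≤ R ^ 2 * ∫ t in Ioc a 1, F (c + t • (x - c)) := by
    rw [← intervalIntegral.integral_of_le (div_le_one_of_le₀ hρR hR)]
    exact sq_le_integral_gradient_of_eqOn_closedBall hu hρ hρR hzero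
      (by simpa [dist_eq_norm] using hSR hx)
  have hG := integrable_comp_homothety_prod μ hF hSR a
  have hslice (t : ℝ) (ht : t ∈ Ioc a 1) :
      ∫ x in S, F (c + t • (x - c)) ∂μ ≤ (R / ρ) ^ Module.finrank ℝ E * ∫ x in S, F x ∂μ := by
    have ht0 := ha.trans ht.1
    refine (setIntegral_comp_homothety_le μ hS (fun _ => sq_nonneg _) (hintS hF) ht0 ht.2).trans ?_
    gcongr
    rw [← inv_pow, ← inv_div]
    gcongr
    exact ht.1.le
  calc ∫ x in S, u x ^ 2 ∂μ ≤ ∫ x in S, R ^ 2 * (∫ t in Ioc a 1, F (c + t • (x - c))) ∂μ :=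
        setIntegral_mono_on (hintS (hu.continuous.pow 2)) (hG.integral_prod_left.const_mul _) hSm
          hpoint
    _ = R ^ 2 * ∫ t in Ioc a 1, ∫ x in S, F (c + t • (x - c)) ∂μ := by
        rw [integral_const_mul, integral_integral_swap hG]
    _ ≤ R ^ 2 * ∫ _ in Ioc a 1, (R / ρ) ^ Module.finrank ℝ E * ∫ x in S, F x ∂μ := by
        refine mul_le_mul_of_nonneg_left ?_ (sq_nonneg R)
        exact setIntegral_mono_on hG.integral_prod_right (integrable_const _) measurableSet_Ioc
          hslice
    _ ≤ R ^ 2 * ((R / ρ) ^ Module.finrank ℝ E * ∫ x in S, F x ∂μ) := by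
        rw [setIntegral_const, Real.volume_real_Ioc_of_le (div_le_one_of_le₀ hρR hR), smul_eq_mul]
        exact mul_le_mul_of_nonneg_left
          (mul_le_of_le_one_left (mul_nonneg (by positivity) hIF) (by linarith)) (sq_nonneg R)
    _ = R ^ 2 * (R / ρ) ^ Module.finrank ℝ E * ∫ x in S, F x ∂μ := by ring

end Haar

theorem integral_le_mul_of_forall_setIntegral_le {X ι : Type*} [MeasurableSpace X]
    {μ : Measure X} [Countable ι] {S : ι → Set X} (hSm : ∀ k, MeasurableSet (S k))
    (hdisj : Pairwise (Disjoint on S)) (hcover : ⋃ k, S k = univ) {f g : X → ℝ}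
    (hf : Integrable f μ) (hg : Integrable g μ) {C : ℝ}
    (h : ∀ k, ∫ x in S k, f x ∂μ ≤ C * ∫ x in S k, g x ∂μ) :
    ∫ x, f x ∂μ ≤ C * ∫ x, g x ∂μ := by
  have hsum {φ : X → ℝ} (hφ : Integrable φ μ) :
      HasSum (fun k => ∫ x in S k, φ x ∂μ) (∫ x, φ x ∂μ) := by
    simpa [hcover] using hasSum_integral_iUnion hSm hdisj hφ.integrableOn
  exact hasSum_le h (hsum hf) ((hsum hg).mul_left C)

lemma exists_pos_forall_of_eventually_cofinite {ι : Type*} {P : ι → ℝ → Prop}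
    (hmono : ∀ k ⦃r s : ℝ⦄, 0 < r → r ≤ s → P k s → P k r) (hex : ∀ k, ∃ r > 0, P k r)
    {r₀ : ℝ} (hr₀ : 0 < r₀) (hcof : ∀ᶠ k in cofinite, P k r₀) : ∃ r > 0, ∀ k, P k r := by
  have hnear (k : ι) : ∀ᶠ r in 𝓝[>] 0, P k r := by
    obtain ⟨s, hs, hPs⟩ := hex k
    filter_upwards [Ioo_mem_nhdsGT hs] with r hr using hmono k hr.1 hr.2.le hPs
  have hexceptions := (eventually_all_finite (eventually_cofinite.1 hcof)).2 fun k _ => hnear k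
  obtain ⟨r, hexc, hr, hrr₀⟩ := (hexceptions.and (Ioo_mem_nhdsGT hr₀)).exists
  refine ⟨r, hr, fun k => ?_⟩
  by_cases hk : P k r₀
  · exact hmono k hr hrr₀.le hk
  · exact hexc k hk

lemma sub_dist_le_infDist_frontier {X : Type*} [PseudoMetricSpace X] {U : Set X} (hU : IsOpen U)
    (hfr : (frontier U).Nonempty) {x : X} {r : ℝ} (hball : ball x r ⊆ U) (y : X) :
    r - dist y x ≤ infDist y (frontier U) := by
  refine (le_infDist hfr).2 fun z hz => ?_
  have hzU : z ∉ U := fun h => (hU.inter_frontier_eq ▸ ⟨h, hz⟩ : z ∈ (∅ : Set X))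
  have hzr : r ≤ dist z x := not_lt.1 fun h => hzU (hball h)
  linarith [dist_triangle z y x, dist_comm y z]

section Perforation

variable {d : ℕ}

def latticePoint (d : ℕ) (k : Fin d → ℤ) : Euc d := WithLp.toLp 2 fun i => (k i : ℝ)

lemma perHole_eq_preimage (Oper : Set (Euc d)) (k : Fin d → ℤ) :
    perHole Oper k = (· - latticePoint d k) ⁻¹' Oper := rfl

lemma zero_notMem_unitCube (hd : 0 < d) : (0 : Euc d) ∉ unitCube d :=
  fun h => (h ⟨0, hd⟩).1.false

lemma ball_subset_perMinus (hd : 0 < d) {Oper : Set (Euc d)} (hOperOpen : IsOpen Oper)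
    (hOperQ : Oper ⊆ unitCube d) {x₀ : Euc d} {r β : ℝ} (hball : ball x₀ r ⊆ Oper)
    (k : Fin d → ℤ) (hβ : β < r / 2) :
    ball (x₀ + latticePoint d k) (r / 2) ⊆ perMinus Oper k β := by
  rw [perMinus, perHole_eq_preimage]
  have hball' : ball (x₀ + latticePoint d k) r ⊆ (· - latticePoint d k) ⁻¹' Oper := fun y hy =>
    hball (by rwa [mem_ball, dist_sub_eq_dist_add_left])
  have hopen : IsOpen ((· - latticePoint d k) ⁻¹' Oper) :=
    hOperOpen.preimage (continuous_sub_right _)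
  intro y hy
  have hyr : y ∈ ball (x₀ + latticePoint d k) r :=
    ball_subset_ball (half_le_self (by linarith [pos_of_mem_ball hy])) hy
  have hk : latticePoint d k ∉ (· - latticePoint d k) ⁻¹' Oper := fun h =>
    zero_notMem_unitCube hd (hOperQ (by simpa using h))
  have hfr := nonempty_frontier_iff.2 ⟨⟨y, hball' hyr⟩, ne_univ_iff_exists_notMem _ |>.2 ⟨_, hk⟩⟩
  exact ⟨hball' hyr, by linarith [sub_dist_le_infDist_frontier hopen hfr hball' y, mem_ball.1 hy]⟩

lemma exists_uniform_ball_subset_holes (hd : 0 < d) {Oper : Set (Euc d)}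
    (hOperOpen : IsOpen Oper) (hOperNe : Oper.Nonempty) (hOperQ : Oper ⊆ unitCube d)
    {O : (Fin d → ℤ) → Set (Euc d)} (hOopen : ∀ k, IsOpen (O k)) (hONe : ∀ k, (O k).Nonempty)
    (hOcell : ∀ k, O k ⊆ cell d k) {α : (Fin d → ℤ) → ℝ} (hαsum : Summable α)
    (hA2 : ∀ k, perMinus Oper k (α k) ⊆ O k) :
    ∃ ρ > 0, ∀ k, ∃ c ∈ cell d k, ball c ρ ⊆ O k := by
  obtain ⟨x₀, hx₀⟩ := hOperNe
  obtain ⟨r, hr, hball⟩ := Metric.isOpen_iff.1 hOperOpen x₀ hx₀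
  refine exists_pos_forall_of_eventually_cofinite
    (fun k ρ σ _ hρσ ⟨c, hc, hcσ⟩ => ⟨c, hc, (ball_subset_ball hρσ).trans hcσ⟩)
    (fun k => ?_) (half_pos hr) ?_
  · obtain ⟨c, hc⟩ := hONe k
    obtain ⟨ρ, hρ, hcρ⟩ := Metric.isOpen_iff.1 (hOopen k) c hc
    exact ⟨ρ, hρ, c, hOcell k hc, hcρ⟩
  · filter_upwards [hαsum.tendsto_cofinite_zero.eventually (gt_mem_nhds (half_pos hr))] with k hk
    have hsub := (ball_subset_perMinus hd hOperOpen hOperQ hball k hk).trans (hA2 k)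
    exact ⟨_, hOcell k (hsub (mem_ball_self (half_pos hr))), hsub⟩

/-- The rescaled open cells `ε • cell d k` only cover space up to a null set; these half-open
ones partition it. -/
def halfOpenCell (d : ℕ) (k : Fin d → ℤ) : Set (Euc d) := {x | ∀ i, ⌊x i⌋ = k i}

lemma halfOpenCell_eq_iInter (k : Fin d → ℤ) :
    halfOpenCell d k = ⋂ i, (fun x : Euc d => x i) ⁻¹' Ico (k i : ℝ) (k i + 1) := by
  ext x
  simp [halfOpenCell, Int.floor_eq_iff]

lemma measurableSet_halfOpenCell (k : Fin d → ℤ) : MeasurableSet (halfOpenCell d k) := by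
  rw [halfOpenCell_eq_iInter]
  exact .iInter fun i => measurableSet_Ico.preimage (by fun_prop)

lemma convex_halfOpenCell (k : Fin d → ℤ) : Convex ℝ (halfOpenCell d k) := by
  rw [halfOpenCell_eq_iInter]
  exact convex_iInter fun i => (convex_Ico _ _).linear_preimage (EuclideanSpace.proj i).toLinearMap

lemma cell_subset_halfOpenCell (k : Fin d → ℤ) : cell d k ⊆ halfOpenCell d k := fun x hx i =>
  Int.floor_eq_iff.2 ⟨by linarith [(hx i).1], by linarith [(hx i).2]⟩

lemma dist_le_sqrt_of_mem_halfOpenCell {k : Fin d → ℤ} {x y : Euc d} (hx : x ∈ halfOpenCell d k)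
    (hy : y ∈ halfOpenCell d k) : dist x y ≤ √d := by
  rw [halfOpenCell_eq_iInter] at hx hy
  simp only [mem_iInter, mem_preimage, mem_Ico] at hx hy
  rw [EuclideanSpace.dist_eq]
  gcongr
  calc ∑ i, dist (x i) (y i) ^ 2 ≤ ∑ _i : Fin d, (1 : ℝ) := by
        gcongr with i
        rw [Real.dist_eq, sq_abs]
        nlinarith [hx i, hy i]
    _ = d := by simp

lemma pairwise_disjoint_smul_halfOpenCell {ε : ℝ} (hε : ε ≠ 0) :
    Pairwise (Disjoint on fun k => ε • halfOpenCell d k) := fun k k' hkk' => by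
  refine (disjoint_image_iff (smul_right_injective _ hε)).2 (disjoint_left.2 fun x hx hx' => ?_)
  exact hkk' (funext fun i => (hx i).symm.trans (hx' i))

lemma iUnion_smul_halfOpenCell {ε : ℝ} (hε : ε ≠ 0) : ⋃ k, ε • halfOpenCell d k = univ := by
  have hcover : ⋃ k, halfOpenCell d k = univ :=
    iUnion_eq_univ_iff.2 fun x => ⟨fun i => ⌊x i⌋, fun _ => rfl⟩
  rw [← smul_set_iUnion, hcover, smul_set_univ₀ hε]

lemma setIntegral_sq_le_smul_halfOpenCell {u : Euc d → ℝ} (hu : ContDiff ℝ 1 u) {ε ρ : ℝ}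
    (hε : 0 < ε) (hρ : 0 < ρ) {k : Fin d → ℤ} {c : Euc d} (hc : c ∈ cell d k)
    (hzero : ∀ y ∈ ε • closedBall c ρ, u y = 0) :
    ∫ x in ε • halfOpenCell d k, u x ^ 2 ≤
      d * (√d / ρ) ^ d * ε ^ 2 * ∫ x in ε • halfOpenCell d k, ‖gradient u x‖ ^ 2 := by
  have hc' := cell_subset_halfOpenCell k hc
  have hSR : ε • halfOpenCell d k ⊆ closedBall (ε • c) (ε * √d) := by
    have h := _root_.smul_closedBall ε c (Real.sqrt_nonneg d)
    rw [Real.norm_of_nonneg hε.le] at h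
    rw [← h]
    exact smul_set_mono fun x hx => dist_le_sqrt_of_mem_halfOpenCell hx hc'
  rw [_root_.smul_closedBall _ _ hρ.le, Real.norm_of_nonneg hε.le] at hzero
  convert setIntegral_sq_le_of_eqOn_closedBall volume hu
    ((measurableSet_halfOpenCell k).const_smul₀ ε)
    (((convex_halfOpenCell k).smul ε).starConvex (smul_mem_smul_set hc')) (by positivity)
    (by positivity) hSR hzero using 2
  rw [finrank_euclideanSpace_fin, mul_div_mul_left _ _ hε.ne', mul_pow,
    Real.sq_sqrt (Nat.cast_nonneg d)]
  ring

lemma integral_sq_le_of_eqOn_smul_closedBall {u : Euc d → ℝ} (hu : ContDiff ℝ 1 u)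
    (hsupp : HasCompactSupport u) {ε ρ : ℝ} (hε : 0 < ε) (hρ : 0 < ρ) {c : (Fin d → ℤ) → Euc d}
    (hc : ∀ k, c k ∈ cell d k) (hzero : ∀ k, ∀ y ∈ ε • closedBall (c k) ρ, u y = 0) :
    ∫ x, u x ^ 2 ≤ d * (√d / ρ) ^ d * ε ^ 2 * ∫ x, ‖gradient u x‖ ^ 2 := by
  have hu2 : Integrable fun x => u x ^ 2 :=
    ((continuous_pow 2).comp hu.continuous).integrable_of_hasCompactSupport
      (hsupp.comp_left (g := fun t : ℝ => t ^ 2) (by norm_num))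
  have hgrad2 : Integrable fun x => ‖gradient u x‖ ^ 2 :=
    ((continuous_pow 2).comp hu.continuous_gradient.norm).integrable_of_hasCompactSupport
      (hsupp.gradient.norm.comp_left (g := fun t : ℝ => t ^ 2) (by norm_num))
  exact integral_le_mul_of_forall_setIntegral_le
    (fun k => (measurableSet_halfOpenCell k).const_smul₀ ε)
    (pairwise_disjoint_smul_halfOpenCell hε.ne') (iUnion_smul_halfOpenCell hε.ne') hu2 hgrad2
    fun k => setIntegral_sq_le_smul_halfOpenCell hu hε hρ (hc k) (hzero k)

end Perforation

theorem poincare_perforated_nonperiodic_general (d : ℕ) (hd : 2 ≤ d)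
    (Oper : Set (Euc d)) (hOperOpen : IsOpen Oper) (hOperNe : Oper.Nonempty)
    (hOperQ : closure Oper ⊆ unitCube d)
    (O : (Fin d → ℤ) → Set (Euc d)) (hOopen : ∀ k, IsOpen (O k))
    (hONe : ∀ k, (O k).Nonempty) (hOcell : ∀ k, closure (O k) ⊆ cell d k)
    (α : (Fin d → ℤ) → ℝ) (hαsum : Summable α)
    (hA2 : ∀ k, perMinus Oper k (α k) ⊆ O k ∧ O k ⊆ perPlus Oper k (α k))
    (Ω : Set (Euc d)) :
    ∃ C > (0 : ℝ), ∀ ε > (0 : ℝ), ∀ u : Euc d → ℝ,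
      ContDiff ℝ 1 u → HasCompactSupport u →
      tsupport u ⊆ Ω \ ε • closure (holes O) →
      ∫ x in Ω \ ε • closure (holes O), (u x) ^ 2 ≤
        C * ε ^ 2 * ∫ x in Ω \ ε • closure (holes O), ‖gradient u x‖ ^ 2 := by
  obtain ⟨ρ, hρ, hballs⟩ := exists_uniform_ball_subset_holes (by omega) hOperOpen hOperNe
    (subset_closure.trans hOperQ) hOopen hONe (fun k => subset_closure.trans (hOcell k)) hαsum
    fun k => (hA2 k).1
  choose c hc hcO using hballs
  refine ⟨d * (√d / ρ) ^ d, by positivity, fun ε hε u hu hsupp hsub => ?_⟩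
  have hvanish (x : Euc d) (hx : x ∉ Ω \ ε • closure (holes O)) : x ∉ tsupport u :=
    fun h => hx (hsub h)
  rw [setIntegral_eq_integral_of_forall_compl_eq_zero fun x hx => by
      rw [image_eq_zero_of_notMem_tsupport (hvanish x hx), zero_pow two_ne_zero],
    setIntegral_eq_integral_of_forall_compl_eq_zero fun x hx => by
      rw [gradient_of_notMem_tsupport (hvanish x hx), norm_zero, zero_pow two_ne_zero]]
  refine integral_sq_le_of_eqOn_smul_closedBall hu hsupp hε hρ hc fun k y hy => ?_
  have hholes : closedBall (c k) ρ ⊆ closure (holes O) := by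
    rw [← closure_ball _ hρ.ne']
    exact closure_mono ((hcO k).trans (subset_iUnion O k))
  exact image_eq_zero_of_notMem_tsupport (hvanish y fun hy' => hy'.2 (smul_set_mono hholes hy))

/-- scaled Poincaré–Friedrichs inequality in the non-periodically perforated
domain `Ω_ε = Ω \ ε·closure(𝒪)` (Lemma 3.2 of the paper). -/
theorem poincare_perforated_nonperiodic (d : ℕ) (hd : 2 ≤ d)
    (Oper : Set (Euc d)) (hOperOpen : IsOpen Oper) (hOperNe : Oper.Nonempty)
    (hOperQ : closure Oper ⊆ unitCube d)
    (O : (Fin d → ℤ) → Set (Euc d)) (hOopen : ∀ k, IsOpen (O k))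
    (hONe : ∀ k, (O k).Nonempty) (hOcell : ∀ k, closure (O k) ⊆ cell d k)
    (α : (Fin d → ℤ) → ℝ) (hαpos : ∀ k, 0 ≤ α k) (hαsum : Summable α)
    (hA2 : ∀ k, perMinus Oper k (α k) ⊆ O k ∧ O k ⊆ perPlus Oper k (α k))
    (Ω : Set (Euc d)) (hΩ : IsOpen Ω) :
    ∃ C > (0 : ℝ), ∀ ε > (0 : ℝ), ∀ u : Euc d → ℝ,
      ContDiff ℝ 1 u → HasCompactSupport u →
      tsupport u ⊆ Ω \ ε • closure (holes O) →
      ∫ x in Ω \ ε • closure (holes O), (u x) ^ 2 ≤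
        C * ε ^ 2 * ∫ x in Ω \ ε • closure (holes O), ‖gradient u x‖ ^ 2 :=
  poincare_perforated_nonperiodic_general d hd Oper hOperOpen hOperNe hOperQ O hOopen hONe hOcell α
    hαsum hA2 Ω
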